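/- arXiv:2508.13824 — 5 statements merged into one kernel-verified Lean document; each statement's English description precedes it below -/
import Mathlib

section
/- For every p with 0 ≤ p ≤ N one has Σ_{q=0}^{N} κ_{pq} = ψ_p, and for every q with 0 ≤ q ≤ N one has Σ_{p=0}^{N} κ_{pq} = ψ̃_q. (Row sums of the ADER-DG matrix κ give the left boundary values ψ of the Lagrange basis and column sums give the right boundary values ψ̃.) -/
/-!
Lagrange's basis is a partition of unity, `∑ q, φ q = 1`. Summing `κ p q` over `q` therefore
leaves `ψ̃ p - ∫₀¹ φ p' = ψ p` by the fundamental theorem of calculus, while summing over `p`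
kills the integral, because `∑ p, φ p' = (∑ p, φ p)' = 0`, and leaves `ψ̃ q * ∑ p, ψ̃ p = ψ̃ q`.
-/

open Finset intervalIntegral

theorem Lagrange.eval_basis_eq_prod {F : Type*} [Field F] {ι : Type*} [DecidableEq ι]
    (s : Finset ι) (v : ι → F) (i : ι) (x : F) :
    (Lagrange.basis s v i).eval x = ∏ k ∈ s.erase i, (x - v k) / (v i - v k) := by
  simp only [Lagrange.basis, Polynomial.eval_prod]
  refine prod_congr rfl fun k _ => ?_
  simp [Lagrange.basisDivisor, div_eq_inv_mul]

theorem Polynomial.contDiff_eval (P : Polynomial ℝ) (n : WithTop ℕ∞) :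
    ContDiff ℝ n fun x => P.eval x := by
  simpa only [Polynomial.coe_aeval_eq_eval] using P.contDiff_aeval (𝕜 := ℝ) n

noncomputable def aderKappa {ι : Type*} (φ : ι → ℝ → ℝ) (p q : ι) : ℝ :=
  φ p 1 * φ q 1 - ∫ x in (0 : ℝ)..1, deriv (φ p) x * φ q x

section PartitionOfUnity

variable {ι : Type*} [Fintype ι] {φ : ι → ℝ → ℝ}

theorem sum_deriv_eq_zero_of_sum_eq_one (hφ : ∀ p, Differentiable ℝ (φ p))
    (hsum : ∀ x, ∑ p, φ p x = 1) (x : ℝ) : ∑ p, deriv (φ p) x = 0 := by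
  rw [← deriv_fun_sum fun p _ => hφ p x]
  simp [hsum]

theorem intervalIntegrable_deriv_mul {f g : ℝ → ℝ} (hf : ContDiff ℝ 1 f) (hg : Continuous g)
    (a b : ℝ) : IntervalIntegrable (fun x => deriv f x * g x) MeasureTheory.volume a b :=
  (hf.continuous_deriv_one.mul hg).intervalIntegrable a b

theorem aderKappa_row_sum (hφ : ∀ p, ContDiff ℝ 1 (φ p)) (hsum : ∀ x, ∑ p, φ p x = 1)
    (p : ι) : ∑ q, aderKappa φ p q = φ p 0 := by
  have hFTC : ∫ x in (0 : ℝ)..1, deriv (φ p) x = φ p 1 - φ p 0 :=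
    integral_deriv_eq_sub (fun x _ => (hφ p).differentiable one_ne_zero x)
      ((hφ p).continuous_deriv_one.intervalIntegrable 0 1)
  calc ∑ q, aderKappa φ p q
      = φ p 1 * ∑ q, φ q 1 - ∫ x in (0 : ℝ)..1, deriv (φ p) x * ∑ q, φ q x := by
        simp only [aderKappa, sum_sub_distrib, mul_sum]
        rw [integral_finsetSum fun q _ =>
          intervalIntegrable_deriv_mul (hφ p) (hφ q).continuous 0 1]
    _ = φ p 0 := by
        simp only [hsum, mul_one, hFTC]
        ring

theorem aderKappa_col_sum (hφ : ∀ p, ContDiff ℝ 1 (φ p)) (hsum : ∀ x, ∑ p, φ p x = 1)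
    (q : ι) : ∑ p, aderKappa φ p q = φ q 1 := by
  have hderiv := sum_deriv_eq_zero_of_sum_eq_one (fun p => (hφ p).differentiable one_ne_zero) hsum
  calc ∑ p, aderKappa φ p q
      = (∑ p, φ p 1) * φ q 1 - ∫ x in (0 : ℝ)..1, (∑ p, deriv (φ p) x) * φ q x := by
        simp only [aderKappa, sum_sub_distrib, sum_mul]
        rw [integral_finsetSum fun p _ =>
          intervalIntegrable_deriv_mul (hφ p) (hφ q).continuous 0 1]
    _ = φ q 1 := by simp [hsum, hderiv]

end PartitionOfUnity

/-- Row sums of the ADER-DG matrix κ give the left boundary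
values ψ of the Lagrange basis, and column sums give the right boundary
values ψ̃. -/
theorem aderdg_kappa_row_col_sums
    (N : ℕ) (τ : Fin (N + 1) → ℝ) (hτ : Function.Injective τ)
    (φ : Fin (N + 1) → ℝ → ℝ)
    (hφ : ∀ p x, φ p x = ∏ k ∈ Finset.univ.erase p, (x - τ k) / (τ p - τ k))
    (ψ ψt : Fin (N + 1) → ℝ)
    (hψ : ∀ p, ψ p = φ p 0) (hψt : ∀ p, ψt p = φ p 1)
    (κ : Matrix (Fin (N + 1)) (Fin (N + 1)) ℝ)
    (hκ : ∀ p q, κ p q = ψt p * ψt q - ∫ x in (0:ℝ)..1, deriv (φ p) x * φ q x) :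
    (∀ p, ∑ q, κ p q = ψ p) ∧ (∀ q, ∑ p, κ p q = ψt q) := by
  have hφ_basis : φ = fun p x => (Lagrange.basis univ τ p).eval x := by
    funext p x
    rw [hφ, Lagrange.eval_basis_eq_prod]
  have hsmooth : ∀ p, ContDiff ℝ 1 (φ p) := fun p => by
    rw [hφ_basis]
    exact Polynomial.contDiff_eval _ 1
  have hunity : ∀ x, ∑ p, φ p x = 1 := fun x => by
    simp only [hφ_basis, ← Polynomial.eval_finsetSum,
      Lagrange.sum_basis hτ.injOn univ_nonempty, Polynomial.eval_one]
  have hκ_eq : κ = aderKappa φ := by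
    ext p q
    rw [hκ, hψt, hψt, aderKappa]
  subst hκ_eq
  exact ⟨fun p => hψ p ▸ aderKappa_row_sum hsmooth hunity p,
    fun q => hψt q ▸ aderKappa_col_sum hsmooth hunity q⟩
end

section
/- For every q with 0 ≤ q ≤ N one has Σ_{p=0}^{N} a_{pq} ψ̃_p = w_q, i.e. aᵀ ψ̃ = w: the right endpoint values ψ̃ of the Lagrange basis reproduce the quadrature weights through the transpose of the ADER-DG Runge–Kutta matrix a. -/
/-! The Lagrange basis is a partition of unity, so its derivatives sum to zero and every
column of `κ` sums to `ψ̃_q · ∑_p ψ̃_p = ψ̃_q`; that is, `𝟙ᵀ κ = ψ̃ᵀ`. Hence `ψ̃ᵀ κ⁻¹ = 𝟙ᵀ` and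
`ψ̃ᵀ a = 𝟙ᵀ diag(w) = wᵀ`. -/

open Matrix Polynomial

namespace Lagrange

variable {F ι : Type*} [Field F] [DecidableEq ι] {s : Finset ι} {v : ι → F}

theorem eval_basis (i : ι) (x : F) :
    (Lagrange.basis s v i).eval x = ∏ j ∈ s.erase i, (x - v j) / (v i - v j) := by
  rw [Lagrange.basis, eval_prod]
  refine Finset.prod_congr rfl fun j _ => ?_
  simp [basisDivisor, div_eq_inv_mul, mul_comm]

theorem sum_derivative_basis (hvs : Set.InjOn v s) (hs : s.Nonempty) :
    ∑ i ∈ s, derivative (Lagrange.basis s v i) = 0 := by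
  rw [← derivative_sum, sum_basis hvs hs, derivative_one]

theorem sum_integral_deriv_basis_mul {v : ι → ℝ} (hvs : Set.InjOn v s) (hs : s.Nonempty)
    {f : ℝ → ℝ} (hf : Continuous f) (a b : ℝ) :
    ∑ i ∈ s, ∫ x in a..b, deriv (fun x => (Lagrange.basis s v i).eval x) x * f x = 0 := by
  simp_rw [Polynomial.deriv]
  rw [← intervalIntegral.integral_finsetSum fun i _ =>
    (by fun_prop : Continuous fun x => _ * f x).intervalIntegrable a b]
  simp_rw [← Finset.sum_mul, ← eval_finsetSum, sum_derivative_basis hvs hs, eval_zero, zero_mul,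
    intervalIntegral.integral_zero]

end Lagrange

theorem Matrix.vecMul_nonsing_inv_of_vecMul_eq {m R : Type*} [Fintype m] [DecidableEq m]
    [CommRing R] {A : Matrix m m R} (hA : IsUnit A.det) {u v : m → R} (h : v ᵥ* A = u) :
    u ᵥ* A⁻¹ = v := by
  rw [← h, vecMul_vecMul, mul_nonsing_inv A hA, vecMul_one]

theorem aderdg_a_transpose_psit_eq_w_general
    (N : ℕ) (τ : Fin (N + 1) → ℝ) (hτ : Function.Injective τ)
    (φ : Fin (N + 1) → ℝ → ℝ)
    (hφ : ∀ p x, φ p x = ∏ k ∈ Finset.univ.erase p, (x - τ k) / (τ p - τ k))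
    (ψt w : Fin (N + 1) → ℝ)
    (hψt : ∀ p, ψt p = φ p 1)
    (κ : Matrix (Fin (N + 1)) (Fin (N + 1)) ℝ)
    (hκ : ∀ p q, κ p q = ψt p * ψt q - ∫ x in (0:ℝ)..1, deriv (φ p) x * φ q x)
    (hinv : IsUnit κ.det)
    (a : Matrix (Fin (N + 1)) (Fin (N + 1)) ℝ)
    (ha : a = κ⁻¹ * Matrix.diagonal w) :
    ∀ q, ∑ p, a p q * ψt p = w q := by
  obtain rfl : φ = fun p x => (Lagrange.basis Finset.univ τ p).eval x :=
    funext₂ fun p x => by rw [hφ, Lagrange.eval_basis]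
  have hψt_sum : ∑ p, ψt p = 1 := by
    simp_rw [hψt, ← eval_finsetSum, Lagrange.sum_basis hτ.injOn Finset.univ_nonempty, eval_one]
  have hcol : 1 ᵥ* κ = ψt := by
    funext q
    simp only [vecMul, dotProduct, Pi.one_apply, one_mul, hκ]
    rw [Finset.sum_sub_distrib, ← Finset.sum_mul, hψt_sum,
      Lagrange.sum_integral_deriv_basis_mul hτ.injOn Finset.univ_nonempty (Polynomial.continuous _),
      one_mul, sub_zero]
  intro q
  calc ∑ p, a p q * ψt p = (ψt ᵥ* a) q := by simp [vecMul, dotProduct, mul_comm]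
    _ = w q := by
      rw [ha, ← vecMul_vecMul, vecMul_nonsing_inv_of_vecMul_eq hinv hcol, vecMul_diagonal,
        Pi.one_apply, one_mul]

/-- aᵀ ψ̃ = w, where a = κ⁻¹ ⬝ diag(w) is the coefficient matrix of
the IRK-GL-ADER-DG Runge–Kutta method. -/
theorem aderdg_a_transpose_psit_eq_w
    (N : ℕ) (τ : Fin (N + 1) → ℝ) (hτ : Function.Injective τ)
    (φ : Fin (N + 1) → ℝ → ℝ)
    (hφ : ∀ p x, φ p x = ∏ k ∈ Finset.univ.erase p, (x - τ k) / (τ p - τ k))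
    (ψ ψt w : Fin (N + 1) → ℝ)
    (hψ : ∀ p, ψ p = φ p 0) (hψt : ∀ p, ψt p = φ p 1)
    (hw : ∀ p, w p = ∫ x in (0:ℝ)..1, φ p x)
    (κ : Matrix (Fin (N + 1)) (Fin (N + 1)) ℝ)
    (hκ : ∀ p q, κ p q = ψt p * ψt q - ∫ x in (0:ℝ)..1, deriv (φ p) x * φ q x)
    (hinv : IsUnit κ.det)
    (a : Matrix (Fin (N + 1)) (Fin (N + 1)) ℝ)
    (ha : a = κ⁻¹ * Matrix.diagonal w) :
    ∀ q, ∑ p, a p q * ψt p = w q :=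
  aderdg_a_transpose_psit_eq_w_general N τ hτ φ hφ ψt w hψt κ hκ hinv a ha
end

section
/- The trace of κ satisfies tr(κ) = Σ_{p=0}^{N} κ_{pp} = (1/2) Σ_{p=0}^{N} (ψ_p² + ψ̃_p²). If moreover the nodes are symmetric about 1/2, i.e. τ_p = 1 − τ_{N−p} for all p, then tr(κ) = Σ_{p=0}^{N} ψ_p² = Σ_{p=0}^{N} ψ̃_p². -/
/-!
Since `φ_p` is smooth, `φ_p' φ_p` is the derivative of `φ_p² / 2`, so
`κ_pp = ψ̃_p² - (ψ̃_p² - ψ_p²) / 2 = (ψ_p² + ψ̃_p²) / 2`. For symmetric nodes the reflection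
`τ ↦ 1 - τ` maps `φ_p` to `φ_{N-p}`, hence `ψ_p = ψ̃_{N-p}` and the two sums of squares agree.
-/

open intervalIntegral

theorem integral_deriv_mul_self {f : ℝ → ℝ} (hf : ContDiff ℝ 1 f) (a b : ℝ) :
    ∫ x in a..b, deriv f x * f x = (f b ^ 2 - f a ^ 2) / 2 := by
  have hsq : ∀ x ∈ Set.uIcc a b, HasDerivAt (fun y => f y ^ 2 / 2) (deriv f x * f x) x := by
    intro x _
    have h : HasDerivAt (fun y => f y ^ 2 / 2) ((2 : ℕ) * f x ^ (2 - 1) * deriv f x / 2) x :=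
      ((hf.differentiable one_ne_zero x).hasDerivAt.fun_pow 2).div_const 2
    convert h using 1
    push_cast
    ring
  have hint : IntervalIntegrable (fun x => deriv f x * f x) MeasureTheory.volume a b :=
    ((hf.continuous_deriv le_rfl).mul hf.continuous).intervalIntegrable a b
  rw [integral_eq_sub_of_hasDerivAt hsq hint]
  ring

theorem prod_erase_div_sub_of_reflect {ι : Type*} [Fintype ι] [DecidableEq ι] (τ : ι → ℝ)
    (e : ι ≃ ι) {c : ℝ} (he : ∀ i, τ (e i) = c - τ i) (p : ι) (x : ℝ) :
    ∏ k ∈ Finset.univ.erase (e p), (x - τ k) / (τ (e p) - τ k) =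
      ∏ k ∈ Finset.univ.erase p, (c - x - τ k) / (τ p - τ k) := by
  refine (Finset.prod_equiv e (by simp) fun k _ => ?_).symm
  rw [he, he, ← neg_div_neg_eq]
  ring_nf

theorem aderdg_kappa_trace_general
    (N : ℕ) (τ : Fin (N + 1) → ℝ)
    (φ : Fin (N + 1) → ℝ → ℝ)
    (hφ : ∀ p x, φ p x = ∏ k ∈ Finset.univ.erase p, (x - τ k) / (τ p - τ k))
    (ψ ψt : Fin (N + 1) → ℝ)
    (hψ : ∀ p, ψ p = φ p 0) (hψt : ∀ p, ψt p = φ p 1)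
    (κ : Matrix (Fin (N + 1)) (Fin (N + 1)) ℝ)
    (hκ : ∀ p q, κ p q = ψt p * ψt q - ∫ x in (0:ℝ)..1, deriv (φ p) x * φ q x) :
    (∑ p, κ p p = (1 / 2) * ∑ p, (ψ p ^ 2 + ψt p ^ 2)) ∧
      ((∀ p, τ p = 1 - τ p.rev) →
        (∑ p, κ p p = ∑ p, ψ p ^ 2) ∧ (∑ p, κ p p = ∑ p, ψt p ^ 2)) := by
  have hdiag : ∀ p, κ p p = (ψ p ^ 2 + ψt p ^ 2) / 2 := by
    intro p
    have hsmooth : ContDiff ℝ 1 (φ p) := by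
      rw [funext (hφ p)]
      fun_prop
    rw [hκ, integral_deriv_mul_self hsmooth, hψ, hψt]
    ring
  have htrace : ∑ p, κ p p = (1 / 2) * ∑ p, (ψ p ^ 2 + ψt p ^ 2) := by
    rw [Finset.mul_sum]
    exact Finset.sum_congr rfl fun p _ => by rw [hdiag p]; ring
  refine ⟨htrace, fun hsym => ?_⟩
  have hψt_rev : ∀ p, ψt p.rev = ψ p := by
    intro p
    have hrefl : ∀ i, τ (Fin.revPerm i) = 1 - τ i := fun i => by
      simpa using hsym i.rev
    rw [hψt, hψ, hφ, hφ]
    simpa using prod_erase_div_sub_of_reflect τ Fin.revPerm hrefl p 1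
  have hsq : ∑ p, ψ p ^ 2 = ∑ p, ψt p ^ 2 :=
    Fintype.sum_equiv Fin.revPerm _ _ fun p => by simp [hψt_rev]
  rw [htrace, Finset.sum_add_distrib, hsq]
  constructor <;> ring

/-- tr(κ) = (1/2) Σ (ψ_p² + ψ̃_p²); and if the nodes are symmetric
about 1/2 (τ_p = 1 − τ_{N−p}), then tr(κ) = Σ ψ_p² = Σ ψ̃_p². -/
theorem aderdg_kappa_trace
    (N : ℕ) (τ : Fin (N + 1) → ℝ) (hτ : Function.Injective τ)
    (φ : Fin (N + 1) → ℝ → ℝ)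
    (hφ : ∀ p x, φ p x = ∏ k ∈ Finset.univ.erase p, (x - τ k) / (τ p - τ k))
    (ψ ψt : Fin (N + 1) → ℝ)
    (hψ : ∀ p, ψ p = φ p 0) (hψt : ∀ p, ψt p = φ p 1)
    (κ : Matrix (Fin (N + 1)) (Fin (N + 1)) ℝ)
    (hκ : ∀ p q, κ p q = ψt p * ψt q - ∫ x in (0:ℝ)..1, deriv (φ p) x * φ q x) :
    (∑ p, κ p p = (1 / 2) * ∑ p, (ψ p ^ 2 + ψt p ^ 2)) ∧
      ((∀ p, τ p = 1 - τ p.rev) →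
        (∑ p, κ p p = ∑ p, ψ p ^ 2) ∧ (∑ p, κ p p = ∑ p, ψt p ^ 2)) :=
  aderdg_kappa_trace_general N τ φ hφ ψ ψt hψ hψt κ hκ
end

section
/- (Simplifying condition D(N) for the IRK-GL-ADER-DG method.) Under the Gauss–Legendre quadrature property, for all 0 ≤ p ≤ N and all integers r with 0 ≤ r ≤ N − 1 one has Σ_{q=0}^{N} κ_{qp} (1 − τ_q^{r+1}) = (r+1) w_p τ_p^{r}. Equivalently, if κ is invertible and a = κ⁻¹ · diag(w), then Σ_{q=0}^{N} w_q a_{qp} τ_q^{r} = (w_p/(r+1)) (1 − τ_p^{r+1}) for all 0 ≤ p ≤ N and 0 ≤ r ≤ N − 1. -/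
/-!
With `L_p` the Lagrange basis polynomials, `φ_p = L_p` and
`κ_{qp} = L_q(1) L_p(1) - ∫₀¹ L_q' L_p`. For a polynomial `g` of degree `≤ N`, Lagrange
interpolation gives `g = Σ_q g(τ_q) L_q`, hence `Σ_q κ_{qp} g(τ_q) = g(1) L_p(1) - ∫₀¹ g' L_p`.
The integrand has degree `≤ 2N`, so Gauss–Legendre quadrature evaluates the integral exactly as
`w_p g'(τ_p)`. Taking `g = 1 - X^{r+1}` with `r < N` gives the first identity; the second is the
first one multiplied by `κ⁻¹`.
-/

open Polynomial Finset Matrix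

theorem Lagrange.eval_basis_s9 {F ι : Type*} [Field F] [DecidableEq ι] (s : Finset ι) (v : ι → F)
    (i : ι) (x : F) :
    (Lagrange.basis s v i).eval x = ∏ j ∈ s.erase i, (x - v j) / (v i - v j) := by
  simp only [Lagrange.basis, Lagrange.basisDivisor, eval_prod, eval_mul, eval_C, eval_sub, eval_X]
  exact prod_congr rfl fun j _ => inv_mul_eq_div _ _

theorem Lagrange.sum_C_eval_mul_basis {F ι : Type*} [Field F] [DecidableEq ι] {s : Finset ι}
    {v : ι → F} (hvs : Set.InjOn v s) {f : F[X]} (hf : f.degree < #s) :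
    ∑ i ∈ s, C (f.eval (v i)) * Lagrange.basis s v i = f := by
  rw [← Lagrange.interpolate_apply, ← Lagrange.eq_interpolate hvs hf]

theorem Matrix.vecMul_nonsing_inv_eq_of_vecMul_eq {n R : Type*} [Fintype n] [DecidableEq n]
    [CommRing R] {A : Matrix n n R} (hA : IsUnit A.det) {c d : n → R} (h : c ᵥ* A = d) :
    d ᵥ* A⁻¹ = c := by
  rw [← h, vecMul_vecMul, mul_nonsing_inv _ hA, vecMul_one]

theorem Matrix.sum_mul_nonsing_inv_mul_diagonal_apply {n K : Type*} [Fintype n] [DecidableEq n]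
    [Field K] {A : Matrix n n K} (hA : IsUnit A.det) {w c d : n → K} {s : K} (hs : s ≠ 0)
    (h : ∀ p, ∑ q, A q p * c q = s * w p * d p) (p : n) :
    ∑ q, w q * (A⁻¹ * diagonal w) q p * d q = w p / s * c p := by
  have hinv : (fun q => w q * d q) ᵥ* A⁻¹ = fun q => c q / s := by
    refine vecMul_nonsing_inv_eq_of_vecMul_eq hA (funext fun p => ?_)
    calc ∑ q, c q / s * A q p = (∑ q, A q p * c q) / s := by
          rw [sum_div]
          exact sum_congr rfl fun q _ => by ring
      _ = w p * d p := by
          rw [h p]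
          field_simp
  calc ∑ q, w q * (A⁻¹ * diagonal w) q p * d q
      = w p * ((fun q => w q * d q) ᵥ* A⁻¹) p := by
        simp only [vecMul, dotProduct, mul_sum, mul_diagonal]
        exact sum_congr rfl fun q _ => by ring
    _ = w p / s * c p := by
        rw [hinv]
        ring

noncomputable def lagrangeStiffness {N : ℕ} (τ : Fin (N + 1) → ℝ) :
    Matrix (Fin (N + 1)) (Fin (N + 1)) ℝ :=
  fun p q => (Lagrange.basis univ τ p).eval 1 * (Lagrange.basis univ τ q).eval 1 -
    ∫ x in (0:ℝ)..1, (derivative (Lagrange.basis univ τ p) * Lagrange.basis univ τ q).eval x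

def QuadratureExact {N : ℕ} (τ w : Fin (N + 1) → ℝ) (n : ℕ) : Prop :=
  ∀ g : ℝ[X], g.natDegree ≤ n → ∫ x in (0:ℝ)..1, g.eval x = ∑ p, w p * g.eval (τ p)

section GaussQuadrature

variable {N : ℕ} {τ : Fin (N + 1) → ℝ}

theorem sum_lagrangeStiffness_mul_eval (hτ : Function.Injective τ) (p : Fin (N + 1))
    {g : ℝ[X]} (hg : g.natDegree ≤ N) :
    ∑ q, lagrangeStiffness τ q p * g.eval (τ q) =
      g.eval 1 * (Lagrange.basis univ τ p).eval 1 -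
        ∫ x in (0:ℝ)..1, (derivative g * Lagrange.basis univ τ p).eval x := by
  set L := Lagrange.basis univ τ
  have hexpand : ∑ q, C (g.eval (τ q)) * L q = g := by
    refine Lagrange.sum_C_eval_mul_basis hτ.injOn ((degree_le_natDegree).trans_lt ?_)
    simpa using Nat.cast_lt.mpr (Nat.lt_succ_of_le hg)
  have heval : ∑ q, g.eval (τ q) * (L q).eval 1 = g.eval 1 := by
    conv_rhs => rw [← hexpand]
    simp only [eval_finsetSum, eval_mul, eval_C]
  have hintegral : ∑ q, g.eval (τ q) * ∫ x in (0:ℝ)..1, (derivative (L q) * L p).eval x =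
      ∫ x in (0:ℝ)..1, (derivative g * L p).eval x := by
    conv_rhs => rw [← hexpand]
    simp only [derivative_sum, derivative_mul, derivative_C, zero_mul, zero_add, sum_mul,
      eval_finsetSum, eval_mul, eval_C, mul_assoc]
    rw [intervalIntegral.integral_finsetSum fun q _ =>
      (by fun_prop : Continuous _).intervalIntegrable _ _]
    simp only [intervalIntegral.integral_const_mul, ← eval_mul]
  rw [← heval, ← hintegral, sum_mul, ← sum_sub_distrib]
  exact sum_congr rfl fun q _ => by simp only [lagrangeStiffness]; ring

theorem integral_mul_lagrange_basis {w : Fin (N + 1) → ℝ} (hτ : Function.Injective τ)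
    (hGL : QuadratureExact τ w (2 * N + 1))
    (p : Fin (N + 1)) {h : ℝ[X]} (hh : h.natDegree ≤ N + 1) :
    ∫ x in (0:ℝ)..1, (h * Lagrange.basis univ τ p).eval x = w p * h.eval (τ p) := by
  have hdeg : (h * Lagrange.basis univ τ p).natDegree ≤ 2 * N + 1 := by
    refine natDegree_mul_le.trans ?_
    rw [Lagrange.natDegree_basis hτ.injOn (mem_univ p)]
    simp only [card_univ, Fintype.card_fin]
    omega
  rw [hGL _ hdeg, sum_eq_single p]
  · simp [Lagrange.eval_basis_self hτ.injOn (mem_univ p)]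
  · intro q _ hqp
    simp [Lagrange.eval_basis_of_ne hqp.symm (mem_univ q)]
  · exact fun hp => absurd (mem_univ p) hp

theorem sum_lagrangeStiffness_mul_one_sub_pow {w : Fin (N + 1) → ℝ}
    (hτ : Function.Injective τ) (hGL : QuadratureExact τ w (2 * N + 1))
    (p : Fin (N + 1)) {r : ℕ} (hr : r < N) :
    ∑ q, lagrangeStiffness τ q p * (1 - τ q ^ (r + 1)) = (r + 1 : ℝ) * w p * τ p ^ r := by
  have hg : (1 - X ^ (r + 1) : ℝ[X]).natDegree ≤ N := by
    refine (natDegree_sub_le _ _).trans ?_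
    simp only [natDegree_one, natDegree_X_pow]
    omega
  have hg' : (derivative (1 - X ^ (r + 1) : ℝ[X])).natDegree ≤ N + 1 :=
    (natDegree_derivative_le _).trans (by omega)
  have h := sum_lagrangeStiffness_mul_eval hτ p hg
  rw [integral_mul_lagrange_basis hτ hGL p hg'] at h
  simp only [eval_sub, eval_one, eval_pow, eval_X, one_pow, sub_self, zero_mul, derivative_sub,
    derivative_one, derivative_X_pow_succ, map_add, map_natCast, map_one, zero_sub, eval_neg,
    eval_mul, eval_add, eval_natCast, mul_neg, sub_neg_eq_add, zero_add] at h
  rw [h]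
  ring

end GaussQuadrature

theorem aderdg_simplifying_condition_D_general
    (N : ℕ) (τ : Fin (N + 1) → ℝ) (hτ : Function.Injective τ)
    (φ : Fin (N + 1) → ℝ → ℝ)
    (hφ : ∀ p x, φ p x = ∏ k ∈ Finset.univ.erase p, (x - τ k) / (τ p - τ k))
    (ψt w : Fin (N + 1) → ℝ)
    (hψt : ∀ p, ψt p = φ p 1)
    (κ : Matrix (Fin (N + 1)) (Fin (N + 1)) ℝ)
    (hκ : ∀ p q, κ p q = ψt p * ψt q - ∫ x in (0:ℝ)..1, deriv (φ p) x * φ q x)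
    (hGL : ∀ g : Polynomial ℝ, g.natDegree ≤ 2 * N + 1 →
      (∫ x in (0:ℝ)..1, g.eval x) = ∑ p, w p * g.eval (τ p)) :
    (∀ p, ∀ r : ℕ, r < N →
        ∑ q, κ q p * (1 - τ q ^ (r + 1)) = (r + 1 : ℝ) * w p * τ p ^ r) ∧
      (IsUnit κ.det →
        ∀ p, ∀ r : ℕ, r < N →
          ∑ q, w q * (κ⁻¹ * Matrix.diagonal w) q p * τ q ^ r =
            w p / (r + 1 : ℝ) * (1 - τ p ^ (r + 1))) := by
  have hφL : ∀ p, φ p = fun x => (Lagrange.basis univ τ p).eval x := fun p =>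
    funext fun x => by rw [hφ, Lagrange.eval_basis_s9]
  have hκL : κ = lagrangeStiffness τ := by
    ext p q
    simp only [hκ, hψt, hφL, Polynomial.deriv, lagrangeStiffness, eval_mul]
  have hD : ∀ p, ∀ r : ℕ, r < N →
      ∑ q, κ q p * (1 - τ q ^ (r + 1)) = (r + 1 : ℝ) * w p * τ p ^ r := fun p r hr =>
    hκL ▸ sum_lagrangeStiffness_mul_one_sub_pow hτ hGL p hr
  exact ⟨hD, fun hdet p r hr => sum_mul_nonsing_inv_mul_diagonal_apply hdet
    (Nat.cast_add_one_ne_zero r) (fun p => hD p r hr) p⟩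

/-- Simplifying condition D(N) for the IRK-GL-ADER-DG method:
Σ_q κ_{qp} (1 − τ_q^{r+1}) = (r+1) w_p τ_p^r for 0 ≤ r ≤ N−1; equivalently, if
κ is invertible and a = κ⁻¹ diag(w), then
Σ_q w_q a_{qp} τ_q^r = (w_p/(r+1)) (1 − τ_p^{r+1}). -/
theorem aderdg_simplifying_condition_D
    (N : ℕ) (τ : Fin (N + 1) → ℝ) (hτ : Function.Injective τ)
    (hτ01 : ∀ p, τ p ∈ Set.Icc (0:ℝ) 1)
    (φ : Fin (N + 1) → ℝ → ℝ)
    (hφ : ∀ p x, φ p x = ∏ k ∈ Finset.univ.erase p, (x - τ k) / (τ p - τ k))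
    (ψ ψt w : Fin (N + 1) → ℝ)
    (hψ : ∀ p, ψ p = φ p 0) (hψt : ∀ p, ψt p = φ p 1)
    (hw : ∀ p, w p = ∫ x in (0:ℝ)..1, φ p x)
    (κ : Matrix (Fin (N + 1)) (Fin (N + 1)) ℝ)
    (hκ : ∀ p q, κ p q = ψt p * ψt q - ∫ x in (0:ℝ)..1, deriv (φ p) x * φ q x)
    (hGL : ∀ g : Polynomial ℝ, g.natDegree ≤ 2 * N + 1 →
      (∫ x in (0:ℝ)..1, g.eval x) = ∑ p, w p * g.eval (τ p)) :
    (∀ p, ∀ r : ℕ, r < N →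
        ∑ q, κ q p * (1 - τ q ^ (r + 1)) = (r + 1 : ℝ) * w p * τ p ^ r) ∧
      (IsUnit κ.det →
        ∀ p, ∀ r : ℕ, r < N →
          ∑ q, w q * (κ⁻¹ * Matrix.diagonal w) q p * τ q ^ r =
            w p / (r + 1 : ℝ) * (1 - τ p ^ (r + 1))) :=
  aderdg_simplifying_condition_D_general N τ hτ φ hφ ψt w hψt κ hκ hGL
end

section
/- (Padé structure of the stability function.) Assume κ is invertible and every weight w_p is nonzero, and let a = κ⁻¹ · diag(w). Then the denominator polynomial z ↦ det(I − z a) has degree exactly N + 1 (its leading coefficient is (−1)^{N+1} det a ≠ 0), while the numerator polynomial z ↦ det(I − z a + z 𝟙 wᵀ) has degree at most N, i.e. its coefficient of z^{N+1}, which equals det(𝟙 wᵀ − a), vanishes. -/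
/-!
The Lagrange basis is a partition of unity, so summing `κ p q` over `q` leaves
`ψ̃ p - ∫₀¹ φ_p' = φ_p(0)`: the row sums of `κ` are `κ 𝟙 = ψ`. Hence
`𝟙 wᵀ - a = κ⁻¹ (ψ wᵀ - diag w)`, which is singular since `𝟙ᵀ (ψ wᵀ - diag w) = (∑ ψ - 1) wᵀ = 0`.
The coefficient of `z ^ (N + 1)` in `det (1 + z B)` is `det B`; take `B = -a` for the denominator
and `B = 𝟙 wᵀ - a` for the numerator.
-/

open Matrix Polynomial

theorem Lagrange.eval_basis_univ {F ι : Type*} [Field F] [Fintype ι] [DecidableEq ι]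
    (τ : ι → F) (p : ι) (x : F) :
    (Lagrange.basis Finset.univ τ p).eval x =
      ∏ k ∈ Finset.univ.erase p, (x - τ k) / (τ p - τ k) := by
  simp only [Lagrange.basis, Lagrange.basisDivisor, eval_prod, eval_mul, eval_C, eval_sub,
    eval_X, div_eq_inv_mul]

theorem sum_eval_mul_sub_integral_derivative_mul_eq_eval {ι : Type*} [Fintype ι]
    (P : ι → ℝ[X]) (hP : ∑ q, P q = 1) (p : ι) (a b : ℝ) :
    ∑ q, ((P p).eval b * (P q).eval b -
      ∫ x in a..b, (P p).derivative.eval x * (P q).eval x) = (P p).eval a := by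
  have hsum : ∀ x, ∑ q, (P q).eval x = 1 := fun x => by rw [← eval_finsetSum, hP, eval_one]
  have hint : ∑ q, ∫ x in a..b, (P p).derivative.eval x * (P q).eval x =
      ∫ x in a..b, (P p).derivative.eval x := by
    rw [← intervalIntegral.integral_finsetSum
      (f := fun q x => (P p).derivative.eval x * (P q).eval x) fun q _ =>
      ((P p).derivative.continuous.mul (P q).continuous).intervalIntegrable a b]
    simp only [← Finset.mul_sum, hsum, mul_one]
  have hftc : ∫ x in a..b, (P p).derivative.eval x = (P p).eval b - (P p).eval a :=
    intervalIntegral.integral_eq_sub_of_hasDerivAt (fun x _ => (P p).hasDerivAt x)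
      ((P p).derivative.continuous.intervalIntegrable a b)
  rw [Finset.sum_sub_distrib, ← Finset.mul_sum, hsum, hint, hftc]
  ring

section LinearAlgebra

variable {K n : Type*} [Field K] [Fintype n] [DecidableEq n]

theorem Matrix.det_vecMulVec_sub_diagonal_eq_zero {ψ : n → K} (w : n → K)
    (hψ : ∑ i, ψ i = 1) : (vecMulVec ψ w - diagonal w).det = 0 := by
  obtain ⟨i⟩ : Nonempty n := by
    by_contra h
    simp [not_nonempty_iff.mp h] at hψ
  refine (exists_vecMul_eq_zero_iff).mp ⟨1, fun h => one_ne_zero (congrFun h i), ?_⟩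
  ext j
  simp [vecMul_sub, vecMul_vecMulVec, vecMul_diagonal, dotProduct, hψ]

theorem Matrix.det_vecMulVec_one_sub_inv_mul_diagonal_eq_zero {κ : Matrix n n K}
    (hκ : IsUnit κ.det) (w : n → K) (hrow : ∑ i, (κ *ᵥ 1) i = 1) :
    (vecMulVec 1 w - κ⁻¹ * diagonal w).det = 0 := by
  have : vecMulVec 1 w - κ⁻¹ * diagonal w = κ⁻¹ * (vecMulVec (κ *ᵥ 1) w - diagonal w) := by
    rw [← mul_vecMulVec, Matrix.mul_sub, ← Matrix.mul_assoc, nonsing_inv_mul κ hκ, one_mul]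
  rw [this, det_mul, det_vecMulVec_sub_diagonal_eq_zero w hrow, mul_zero]

end LinearAlgebra

section Polynomial

variable {R n : Type*} [CommRing R] [DecidableEq n] (A B : Matrix n n R)

theorem Matrix.one_sub_X_smul_eq_one_add_X_smul_neg :
    (1 : Matrix n n R[X]) - (X : R[X]) • A.map C = 1 + (X : R[X]) • (-A).map C := by
  rw [Matrix.map_neg _ (map_neg C), smul_neg, sub_eq_add_neg]

theorem Matrix.one_sub_X_smul_add_X_smul_eq_one_add_X_smul_sub :
    (1 : Matrix n n R[X]) - (X : R[X]) • A.map C + (X : R[X]) • B.map C =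
      1 + (X : R[X]) • (B - A).map C := by
  rw [Matrix.map_sub _ (map_sub C), smul_sub]
  abel

variable [Fintype n]

theorem Matrix.natDegree_det_one_add_X_smul_le :
    ((1 : Matrix n n R[X]) + (X : R[X]) • A.map C).det.natDegree ≤ Fintype.card n := by
  simpa [add_comm] using natDegree_det_X_add_C_le A 1

theorem Matrix.coeff_det_one_add_X_smul_card :
    ((1 : Matrix n n R[X]) + (X : R[X]) • A.map C).det.coeff (Fintype.card n) = A.det := by
  simpa [add_comm] using coeff_det_X_add_C_card A 1

theorem Matrix.coeff_det_one_sub_X_smul_card :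
    ((1 : Matrix n n R[X]) - (X : R[X]) • A.map C).det.coeff (Fintype.card n) =
      (-1) ^ Fintype.card n * A.det := by
  rw [one_sub_X_smul_eq_one_add_X_smul_neg, coeff_det_one_add_X_smul_card, det_neg]

theorem Matrix.natDegree_det_one_sub_X_smul {A : Matrix n n R} (hA : A.det ≠ 0) :
    ((1 : Matrix n n R[X]) - (X : R[X]) • A.map C).det.natDegree = Fintype.card n := by
  refine natDegree_eq_of_le_of_coeff_ne_zero ?_ ?_
  · rw [one_sub_X_smul_eq_one_add_X_smul_neg]
    exact natDegree_det_one_add_X_smul_le _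
  · rwa [coeff_det_one_sub_X_smul_card, (isUnit_neg_one.pow _).mul_right_eq_zero.ne]

theorem Matrix.coeff_det_one_sub_X_smul_add_X_smul_card :
    ((1 : Matrix n n R[X]) - (X : R[X]) • A.map C + (X : R[X]) • B.map C).det.coeff
      (Fintype.card n) = (B - A).det := by
  rw [one_sub_X_smul_add_X_smul_eq_one_add_X_smul_sub, coeff_det_one_add_X_smul_card]

theorem Matrix.natDegree_det_one_sub_X_smul_add_X_smul_le_card_sub_one
    {A B : Matrix n n R} (h : (B - A).det = 0) :
    ((1 : Matrix n n R[X]) - (X : R[X]) • A.map C + (X : R[X]) • B.map C).det.natDegree ≤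
      Fintype.card n - 1 := by
  refine natDegree_le_pred ?_ ((coeff_det_one_sub_X_smul_add_X_smul_card A B).trans h)
  rw [one_sub_X_smul_add_X_smul_eq_one_add_X_smul_sub]
  exact natDegree_det_one_add_X_smul_le _

end Polynomial

theorem aderdg_pade_structure_general
    (N : ℕ) (τ : Fin (N + 1) → ℝ) (hτ : Function.Injective τ)
    (φ : Fin (N + 1) → ℝ → ℝ)
    (hφ : ∀ p x, φ p x = ∏ k ∈ Finset.univ.erase p, (x - τ k) / (τ p - τ k))
    (ψ ψt w : Fin (N + 1) → ℝ)
    (hψ : ∀ p, ψ p = φ p 0) (hψt : ∀ p, ψt p = φ p 1)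
    (κ : Matrix (Fin (N + 1)) (Fin (N + 1)) ℝ)
    (hκ : ∀ p q, κ p q = ψt p * ψt q - ∫ x in (0:ℝ)..1, deriv (φ p) x * φ q x)
    (hinv : IsUnit κ.det) (hwne : ∀ p, w p ≠ 0)
    (a : Matrix (Fin (N + 1)) (Fin (N + 1)) ℝ)
    (ha : a = κ⁻¹ * Matrix.diagonal w)
    (Dpoly Ppoly : Polynomial ℝ)
    (hD : Dpoly = ((1 : Matrix (Fin (N + 1)) (Fin (N + 1)) (Polynomial ℝ)) -
      (Polynomial.X : Polynomial ℝ) • a.map Polynomial.C).det)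
    (hP : Ppoly = ((1 : Matrix (Fin (N + 1)) (Fin (N + 1)) (Polynomial ℝ)) -
      (Polynomial.X : Polynomial ℝ) • a.map Polynomial.C +
      (Polynomial.X : Polynomial ℝ) •
        (Matrix.vecMulVec (fun _ => (1:ℝ)) w).map Polynomial.C).det) :
    a.det ≠ 0 ∧
      Dpoly.natDegree = N + 1 ∧
      Dpoly.coeff (N + 1) = (-1) ^ (N + 1) * a.det ∧
      Ppoly.natDegree ≤ N ∧
      Ppoly.coeff (N + 1) = (Matrix.vecMulVec (fun _ => (1:ℝ)) w - a).det ∧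
      (Matrix.vecMulVec (fun _ => (1:ℝ)) w - a).det = 0 := by
  set L := Lagrange.basis Finset.univ τ
  have hφL : ∀ p, φ p = fun x => (L p).eval x := fun p => funext fun x => by
    rw [hφ, Lagrange.eval_basis_univ]
  have hsumL : ∑ p, L p = 1 := Lagrange.sum_basis hτ.injOn Finset.univ_nonempty
  have hrow : ∑ p, (κ *ᵥ 1) p = 1 := by
    have hκψ : κ *ᵥ 1 = ψ := funext fun p => by
      simpa [mulVec, dotProduct, hκ, hψt, hψ, hφL, Polynomial.deriv] using
        sum_eval_mul_sub_integral_derivative_mul_eq_eval L hsumL p 0 1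
    simp only [hκψ, hψ, hφL, ← eval_finsetSum, hsumL, eval_one]
  have hsingular : (vecMulVec (fun _ => (1:ℝ)) w - a).det = 0 :=
    ha ▸ det_vecMulVec_one_sub_inv_mul_diagonal_eq_zero hinv w hrow
  have hadet : a.det ≠ 0 := by
    rw [ha, det_mul, det_diagonal]
    exact mul_ne_zero (isUnit_nonsing_inv_det κ hinv).ne_zero
      (Finset.prod_ne_zero_iff.mpr fun p _ => hwne p)
  subst hD hP
  refine ⟨hadet, ?_, ?_, ?_, ?_, hsingular⟩
  · simpa using natDegree_det_one_sub_X_smul hadet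
  · simpa using coeff_det_one_sub_X_smul_card a
  · simpa using natDegree_det_one_sub_X_smul_add_X_smul_le_card_sub_one hsingular
  · simpa using coeff_det_one_sub_X_smul_add_X_smul_card a (vecMulVec (fun _ => (1:ℝ)) w)

/-- Padé structure of the stability function: the denominator
polynomial det(I − z a) has degree exactly N+1 with leading coefficient
(−1)^{N+1} det a ≠ 0, while the numerator polynomial det(I − z a + z 𝟙 wᵀ)
has degree at most N: its coefficient of z^{N+1}, equal to det(𝟙 wᵀ − a),
vanishes. -/
theorem aderdg_pade_structure
    (N : ℕ) (τ : Fin (N + 1) → ℝ) (hτ : Function.Injective τ)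
    (φ : Fin (N + 1) → ℝ → ℝ)
    (hφ : ∀ p x, φ p x = ∏ k ∈ Finset.univ.erase p, (x - τ k) / (τ p - τ k))
    (ψ ψt w : Fin (N + 1) → ℝ)
    (hψ : ∀ p, ψ p = φ p 0) (hψt : ∀ p, ψt p = φ p 1)
    (hw : ∀ p, w p = ∫ x in (0:ℝ)..1, φ p x)
    (κ : Matrix (Fin (N + 1)) (Fin (N + 1)) ℝ)
    (hκ : ∀ p q, κ p q = ψt p * ψt q - ∫ x in (0:ℝ)..1, deriv (φ p) x * φ q x)
    (hinv : IsUnit κ.det) (hwne : ∀ p, w p ≠ 0)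
    (a : Matrix (Fin (N + 1)) (Fin (N + 1)) ℝ)
    (ha : a = κ⁻¹ * Matrix.diagonal w)
    (Dpoly Ppoly : Polynomial ℝ)
    (hD : Dpoly = ((1 : Matrix (Fin (N + 1)) (Fin (N + 1)) (Polynomial ℝ)) -
      (Polynomial.X : Polynomial ℝ) • a.map Polynomial.C).det)
    (hP : Ppoly = ((1 : Matrix (Fin (N + 1)) (Fin (N + 1)) (Polynomial ℝ)) -
      (Polynomial.X : Polynomial ℝ) • a.map Polynomial.C +
      (Polynomial.X : Polynomial ℝ) •
        (Matrix.vecMulVec (fun _ => (1:ℝ)) w).map Polynomial.C).det) :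
    a.det ≠ 0 ∧
      Dpoly.natDegree = N + 1 ∧
      Dpoly.coeff (N + 1) = (-1) ^ (N + 1) * a.det ∧
      Ppoly.natDegree ≤ N ∧
      Ppoly.coeff (N + 1) = (Matrix.vecMulVec (fun _ => (1:ℝ)) w - a).det ∧
      (Matrix.vecMulVec (fun _ => (1:ℝ)) w - a).det = 0 :=
  aderdg_pade_structure_general N τ hτ φ hφ ψ ψt w hψ hψt κ hκ hinv hwne a ha Dpoly Ppoly hD hP
end
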